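/- arXiv:2507.18960 — 8 statements merged into one kernel-verified Lean document; each statement's English description precedes it below -/
import Mathlib

section
/- Let G be a finite abelian group of order r and let n ≥ 1 be an integer. Let B ∈ ℂ[G]^{(n+1)×(n+1)} satisfy the roux conditions (R1)–(R3) and B² = n·I + Σ_{g∈G} c_g·g·B, where c : G → ℝ is real-valued with c_{g⁻¹} = c_g for all g. Let α : G → ℂˣ be a character of G. Set ĉ_α := Σ_{h∈G} c_h·conj(α(h)) (a real number, since c is real-valued and symmetric), and for ε ∈ {1, −1} set μ_α^ε := (ĉ_α + ε·√(ĉ_α² + 4n))/(2n). Define G_α^ε := Σ_{g∈G} α(g)·⌈g·I⌉ + μ_α^ε·Σ_{g∈G} α(g)·⌈g·B⌉. Then for every h ∈ G: ⌈h·I⌉·G_α^ε = conj(α(h))·G_α^ε and ⌈h·B⌉·G_α^ε = n·μ_α^ε·conj(α(h))·G_α^ε. (These eigenvalues conj(α(h)) and n·μ_α^ε·conj(α(h)) are exactly the entries of the first eigenmatrix of the roux scheme associated to B.) -/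
open scoped BigOperators
open Matrix

noncomputable section

/-- The injective algebra homomorphism `⌈·⌉` applying the regular representation
of `G` entrywise: `⌈M⌉_{(i,h),(j,k)}` is the coefficient of `h⁻¹k` in `M_{ij}`. -/
def regLift {G : Type*} [CommGroup G] {ι : Type*}
    (M : Matrix ι ι (MonoidAlgebra ℂ G)) : Matrix (ι × G) (ι × G) ℂ :=
  Matrix.of fun p q => (M p.1 q.1).coeff (p.2⁻¹ * q.2)

namespace RouxAux

variable {G : Type*} [CommGroup G] [Fintype G] [DecidableEq G]
variable {ι : Type*} [Fintype ι] [DecidableEq ι]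

lemma conv (f g : MonoidAlgebra ℂ G) (y : G) :
    (f * g).coeff y = ∑ x : G, f.coeff x * g.coeff (x⁻¹ * y) := by
  rw [MonoidAlgebra.mul_apply_left, Finsupp.sum_fintype]
  intro a; simp

lemma regLift_mul (M N : Matrix ι ι (MonoidAlgebra ℂ G)) :
    regLift (M * N) = regLift M * regLift N := by
  ext ⟨i, h⟩ ⟨j, k⟩
  simp only [regLift, Matrix.mul_apply, Matrix.of_apply]
  rw [MonoidAlgebra.coeff_sum, Finsupp.finset_sum_apply, Fintype.sum_prod_type]
  refine Finset.sum_congr rfl fun l _ => ?_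
  rw [conv]
  refine Fintype.sum_equiv (Equiv.mulLeft h) _ _ fun x => ?_
  simp only [Equiv.coe_mulLeft]
  rw [show (h * x)⁻¹ * k = x⁻¹ * (h⁻¹ * k) by group, inv_mul_cancel_left]

def regLiftL : Matrix ι ι (MonoidAlgebra ℂ G) →ₗ[ℂ] Matrix (ι × G) (ι × G) ℂ where
  toFun := regLift
  map_add' M N := by
    ext ⟨i, h⟩ ⟨j, k⟩
    simp only [regLift, Matrix.of_apply, Matrix.add_apply]
    rw [MonoidAlgebra.coeff_add]; exact Finsupp.add_apply _ _ _
  map_smul' z M := by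
    ext ⟨i, h⟩ ⟨j, k⟩
    simp only [regLift, Matrix.of_apply, Matrix.smul_apply, RingHom.id_apply]
    exact MonoidAlgebra.coeff_smul_apply _ _ _

@[simp] lemma regLiftL_apply (M : Matrix ι ι (MonoidAlgebra ℂ G)) :
    regLiftL M = regLift M := rfl

lemma key (h g : G) (M N : Matrix ι ι (MonoidAlgebra ℂ G)) :
    (MonoidAlgebra.of ℂ G h • M) * (MonoidAlgebra.of ℂ G g • N) =
      MonoidAlgebra.of ℂ G (h * g) • (M * N) := by
  rw [Matrix.smul_mul, Matrix.mul_smul, smul_smul, ← _root_.map_mul]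

lemma reindex_aux (α : G →* ℂˣ) (h : G) (P : Matrix ι ι (MonoidAlgebra ℂ G)) :
    ∑ g : G, (α g : ℂ) • (MonoidAlgebra.of ℂ G (h * g) • P)
      = ((α h : ℂ))⁻¹ • ∑ g : G, (α g : ℂ) • (MonoidAlgebra.of ℂ G g • P) := by
  rw [Finset.smul_sum]
  refine Fintype.sum_equiv (Equiv.mulLeft h) _ _ fun g => ?_
  simp only [Equiv.coe_mulLeft]
  rw [smul_smul]
  congr 1
  rw [_root_.map_mul, Units.val_mul, inv_mul_cancel_left₀ (Units.ne_zero _)]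

lemma main_aux (α : G →* ℂˣ) (h : G) (M N : Matrix ι ι (MonoidAlgebra ℂ G)) :
    (MonoidAlgebra.of ℂ G h • M) * (∑ g : G, (α g : ℂ) • (MonoidAlgebra.of ℂ G g • N))
      = ((α h : ℂ))⁻¹ • ∑ g : G, (α g : ℂ) • (MonoidAlgebra.of ℂ G g • (M * N)) := by
  rw [Finset.mul_sum, ← reindex_aux α h]
  refine Finset.sum_congr rfl fun g _ => ?_
  rw [Matrix.mul_smul, key]

lemma conj_eq_inv (α : G →* ℂˣ) (h : G) :
    (starRingEnd ℂ) ((α h : ℂ)) = ((α h : ℂ))⁻¹ := by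
  rw [← Complex.inv_eq_conj]
  exact Complex.norm_eq_one_of_pow_eq_one
    (by rw [← Units.val_pow_eq_pow_val, ← map_pow, pow_card_eq_one, _root_.map_one, Units.val_one])
    Fintype.card_ne_zero


lemma regLift_smul (z : ℂ) (M : Matrix ι ι (MonoidAlgebra ℂ G)) :
    regLift (z • M) = z • regLift M := map_smul regLiftL z M

lemma sw2 (g g' : G) (z w : ℂ) (B : Matrix ι ι (MonoidAlgebra ℂ G)) :
    w • (MonoidAlgebra.of ℂ G g • (z • (MonoidAlgebra.of ℂ G g' • B)))
      = z • (w • (MonoidAlgebra.of ℂ G (g' * g) • B)) := by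
  rw [smul_comm (MonoidAlgebra.of ℂ G g) z, smul_smul (MonoidAlgebra.of ℂ G g),
    ← _root_.map_mul, mul_comm g g', smul_comm w z]

lemma expand_aux (α : G →* ℂˣ) (c : G → ℝ) (z : ℂ)
    (B : Matrix ι ι (MonoidAlgebra ℂ G))
    (hP : B * B = z • (1 : Matrix ι ι (MonoidAlgebra ℂ G)) +
      ∑ g : G, (c g : ℂ) • (MonoidAlgebra.of ℂ G g • B)) :
    ∑ g : G, (α g : ℂ) • (MonoidAlgebra.of ℂ G g • (B * B)) =
      z • (∑ g : G, (α g : ℂ) •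
          (MonoidAlgebra.of ℂ G g • (1 : Matrix ι ι (MonoidAlgebra ℂ G)))) +
        (∑ g' : G, (c g' : ℂ) * ((α g' : ℂ))⁻¹) •
          (∑ g : G, (α g : ℂ) • (MonoidAlgebra.of ℂ G g • B)) := by
  calc ∑ g : G, (α g : ℂ) • (MonoidAlgebra.of ℂ G g • (B * B))
      = ∑ g : G, (z • ((α g : ℂ) • (MonoidAlgebra.of ℂ G g •
            (1 : Matrix ι ι (MonoidAlgebra ℂ G)))) +
          ∑ g' : G, (c g' : ℂ) • ((α g : ℂ) • (MonoidAlgebra.of ℂ G (g' * g) • B))) := by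
        refine Finset.sum_congr rfl fun g _ => ?_
        rw [hP, smul_add, smul_add]
        congr 1
        · rw [smul_comm (MonoidAlgebra.of ℂ G g) z, smul_comm (α g : ℂ) z]
        · rw [Finset.smul_sum, Finset.smul_sum]
          exact Finset.sum_congr rfl fun g' _ => sw2 g g' _ _ B
    _ = z • (∑ g : G, (α g : ℂ) • (MonoidAlgebra.of ℂ G g •
            (1 : Matrix ι ι (MonoidAlgebra ℂ G)))) +
          ∑ g' : G, (c g' : ℂ) • (∑ g : G, (α g : ℂ) • (MonoidAlgebra.of ℂ G (g' * g) • B)) := by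
        rw [Finset.sum_add_distrib, Finset.smul_sum, Finset.sum_comm]
        congr 1
        exact Finset.sum_congr rfl fun g' _ => (Finset.smul_sum).symm
    _ = _ := by
        congr 1
        rw [Finset.sum_smul]
        exact Finset.sum_congr rfl fun g' _ => by
          rw [reindex_aux α g' B, smul_smul]

end RouxAux

set_option maxHeartbeats 1600000 in
/-- **Eigenvector equations for the (scaled) primitive idempotents of a roux
scheme**: the eigenvalues `conj(α(h))` and `n·μ_α^ε·conj(α(h))` are the entries
of the first eigenmatrix. -/
theorem stmt2 {G : Type*} [CommGroup G] [Fintype G] [DecidableEq G]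
    (n : ℕ) (hn : 1 ≤ n)
    (B : Matrix (Fin (n + 1)) (Fin (n + 1)) (MonoidAlgebra ℂ G))
    (hR1 : ∀ i, B i i = 0)
    (hR23 : ∀ i j, i ≠ j → ∃ g : G,
        B i j = MonoidAlgebra.of ℂ G g ∧ B j i = MonoidAlgebra.of ℂ G g⁻¹)
    (c : G → ℝ) (hcsym : ∀ g : G, c g⁻¹ = c g)
    (hB2 : B * B =
        (n : ℂ) • (1 : Matrix (Fin (n + 1)) (Fin (n + 1)) (MonoidAlgebra ℂ G)) +
          ∑ g : G, (c g : ℂ) • (MonoidAlgebra.of ℂ G g • B))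
    (α : G →* ℂˣ)
    (chat : ℝ)
    (hchat : (chat : ℂ) = ∑ h : G, (c h : ℂ) * (starRingEnd ℂ) ((α h : ℂ)))
    (ε : ℝ) (hε : ε = 1 ∨ ε = -1)
    (μ : ℝ) (hμ : μ = (chat + ε * Real.sqrt (chat ^ 2 + 4 * n)) / (2 * n))
    (Gm : Matrix (Fin (n + 1) × G) (Fin (n + 1) × G) ℂ)
    (hGm : Gm =
        ∑ g : G, ((α g : ℂ)) •
            regLift (MonoidAlgebra.of ℂ G g •
              (1 : Matrix (Fin (n + 1)) (Fin (n + 1)) (MonoidAlgebra ℂ G))) +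
          (μ : ℂ) • ∑ g : G, ((α g : ℂ)) • regLift (MonoidAlgebra.of ℂ G g • B)) :
    ∀ h : G,
      regLift (MonoidAlgebra.of ℂ G h •
            (1 : Matrix (Fin (n + 1)) (Fin (n + 1)) (MonoidAlgebra ℂ G))) * Gm =
          (starRingEnd ℂ) ((α h : ℂ)) • Gm ∧
      regLift (MonoidAlgebra.of ℂ G h • B) * Gm =
          ((n : ℂ) * (μ : ℂ) * (starRingEnd ℂ) ((α h : ℂ))) • Gm := by
  intro h
  have hconj := RouxAux.conj_eq_inv α h
  have hnR : (0:ℝ) < n := by exact_mod_cast Nat.lt_of_lt_of_le Nat.zero_lt_one hn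
  have hne : (n:ℝ) ≠ 0 := ne_of_gt hnR
  have hs : Real.sqrt (chat ^ 2 + 4 * n) ^ 2 = chat ^ 2 + 4 * n :=
    Real.sq_sqrt (by positivity)
  have hquadR : (n:ℝ) * μ ^ 2 = 1 + μ * chat := by
    subst hμ
    rcases hε with rfl | rfl <;> field_simp <;> ring_nf <;> ring_nf at hs <;> nlinarith [hs]
  have hquad : (n:ℂ) * (μ:ℂ) ^ 2 = 1 + (μ:ℂ) * (chat:ℂ) := by exact_mod_cast hquadR
  have hchat' : (chat : ℂ) = ∑ g : G, (c g : ℂ) * ((α g : ℂ))⁻¹ := by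
    rw [hchat]
    exact Finset.sum_congr rfl fun g _ => by rw [RouxAux.conj_eq_inv α g]
  set S1 := ∑ g : G, ((α g : ℂ)) • (MonoidAlgebra.of ℂ G g •
    (1 : Matrix (Fin (n + 1)) (Fin (n + 1)) (MonoidAlgebra ℂ G))) with hS1
  set SB := ∑ g : G, ((α g : ℂ)) • (MonoidAlgebra.of ℂ G g • B) with hSB
  have hGm2 : Gm = regLift (S1 + (μ:ℂ) • SB) := by
    rw [hGm]
    conv_rhs => rw [hS1, hSB, ← RouxAux.regLiftL_apply, map_add, _root_.map_smul, map_sum, map_sum]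
    simp only [_root_.map_smul, RouxAux.regLiftL_apply]
  have e1 : (MonoidAlgebra.of ℂ G h • (1 : Matrix (Fin (n + 1)) (Fin (n + 1)) (MonoidAlgebra ℂ G))) * S1 = ((α h : ℂ))⁻¹ • S1 := by
    rw [hS1]
    simpa using RouxAux.main_aux α h (1 : Matrix (Fin (n + 1)) (Fin (n + 1)) (MonoidAlgebra ℂ G)) 1
  have e2 : (MonoidAlgebra.of ℂ G h • (1 : Matrix (Fin (n + 1)) (Fin (n + 1)) (MonoidAlgebra ℂ G))) * SB = ((α h : ℂ))⁻¹ • SB := by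
    rw [hSB]
    simpa using RouxAux.main_aux α h (1 : Matrix (Fin (n + 1)) (Fin (n + 1)) (MonoidAlgebra ℂ G)) B
  have e3 : (MonoidAlgebra.of ℂ G h • B) * S1 = ((α h : ℂ))⁻¹ • SB := by
    rw [hS1, hSB]
    simpa using RouxAux.main_aux α h B 1
  have e4 : (MonoidAlgebra.of ℂ G h • B) * SB =
      ((α h : ℂ))⁻¹ • ((n:ℂ) • S1 + (chat:ℂ) • SB) := by
    rw [hSB, RouxAux.main_aux α h B B]
    rw [RouxAux.expand_aux α c (n:ℂ) B hB2, ← hchat', hS1]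
  have inner1 : (MonoidAlgebra.of ℂ G h • (1 : Matrix (Fin (n + 1)) (Fin (n + 1)) (MonoidAlgebra ℂ G))) * (S1 + (μ:ℂ) • SB) =
      ((α h : ℂ))⁻¹ • (S1 + (μ:ℂ) • SB) := by
    rw [mul_add, Matrix.mul_smul, e1, e2, smul_add, smul_comm ((μ:ℂ)) (((α h : ℂ))⁻¹)]
  have inner2 : (MonoidAlgebra.of ℂ G h • B) * (S1 + (μ:ℂ) • SB) =
      ((n:ℂ) * (μ:ℂ) * ((α h : ℂ))⁻¹) • (S1 + (μ:ℂ) • SB) := by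
    rw [mul_add, Matrix.mul_smul, e3, e4]
    match_scalars
    · linear_combination (-((α h : ℂ))⁻¹) * hquad
    · ring
  constructor
  · rw [hGm2, ← RouxAux.regLift_mul, inner1, RouxAux.regLift_smul, hconj]
  · rw [hGm2, ← RouxAux.regLift_mul, inner2, RouxAux.regLift_smul, hconj]

end
end

section
/- Let G be a finite abelian group of order r and let n ≥ 1 be an integer. Let B ∈ ℂ[G]^{(n+1)×(n+1)} satisfy the roux conditions (R1)–(R3) and B² = n·I + Σ_{g∈G} c_g·g·B, where c : G → ℝ is real-valued with c_{g⁻¹} = c_g for all g. Let α : G → ℂˣ be a character of G, set ĉ_α := Σ_{h∈G} c_h·conj(α(h)), and for ε ∈ {1, −1} set μ_α^ε := (ĉ_α + ε·√(ĉ_α² + 4n))/(2n) and G_α^ε := Σ_{g∈G} α(g)·⌈g·I⌉ + μ_α^ε·Σ_{g∈G} α(g)·⌈g·B⌉. Then (G_α^ε)² = r·(1 + n·(μ_α^ε)²)·G_α^ε; in particular, since 1 + n·(μ_α^ε)² ≥ 1, the matrix E_α^ε := (1/(r·(1 + n·(μ_α^ε)²)))·G_α^ε is idempotent. -/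
open scoped BigOperators
open Matrix

noncomputable section

set_option linter.unusedSectionVars false

section AuxLemmas
variable {G : Type*} [CommGroup G] [Fintype G] [DecidableEq G] {ι : Type*} [Fintype ι]

lemma ma_mul_apply (f g : MonoidAlgebra ℂ G) (x : G) :
    (f * g).coeff x = ∑ u : G, f.coeff u * g.coeff (u⁻¹ * x) := by
  rw [MonoidAlgebra.coeff_mul_apply_left, Finsupp.sum_fintype]
  intro a; simp

lemma regLift_add (M N : Matrix ι ι (MonoidAlgebra ℂ G)) :
    regLift (M + N) = regLift M + regLift N := by
  ext p q
  simp only [regLift, Matrix.add_apply, Matrix.of_apply]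
  rw [MonoidAlgebra.coeff_add]; exact Finsupp.add_apply _ _ _

lemma regLift_smul (a : ℂ) (M : Matrix ι ι (MonoidAlgebra ℂ G)) :
    regLift (a • M) = a • regLift M := by
  ext p q
  simp only [regLift, Matrix.smul_apply, Matrix.of_apply, smul_eq_mul]
  rw [MonoidAlgebra.coeff_smul, Finsupp.smul_apply, smul_eq_mul]

lemma regLift_sum {κ : Type*} (s : Finset κ) (f : κ → Matrix ι ι (MonoidAlgebra ℂ G)) :
    regLift (∑ k ∈ s, f k) = ∑ k ∈ s, regLift (f k) := by
  ext p q
  simp only [regLift, Matrix.sum_apply, Matrix.of_apply]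
  rw [MonoidAlgebra.coeff_sum]; exact Finset.sum_apply' _

lemma regLift_mul (M N : Matrix ι ι (MonoidAlgebra ℂ G)) :
    regLift (M * N) = regLift M * regLift N := by
  ext ⟨i, h⟩ ⟨j, k⟩
  simp only [regLift, Matrix.mul_apply, Matrix.of_apply]
  rw [MonoidAlgebra.coeff_sum, Finset.sum_apply']
  rw [Fintype.sum_prod_type_right]
  rw [Finset.sum_comm]
  refine Finset.sum_congr rfl fun l _ => ?_
  rw [ma_mul_apply]
  refine Fintype.sum_equiv (Equiv.mulLeft h) _ _ fun u => ?_
  simp [mul_assoc]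


lemma conj_alpha (α : G →* ℂˣ) (g : G) :
    (starRingEnd ℂ) ((α g : ℂ)) = ((α g : ℂ))⁻¹ := by
  have h1 : ((α g : ℂ)) ^ Fintype.card G = 1 := by
    rw [← Units.val_pow_eq_pow_val, ← _root_.map_pow, pow_card_eq_one, _root_.map_one, Units.val_one]
  have hnorm : ‖(α g : ℂ)‖ = 1 :=
    Complex.norm_eq_one_of_pow_eq_one h1 Fintype.card_ne_zero
  rw [← Complex.inv_eq_conj hnorm]

lemma s_mul_of (α : G →* ℂˣ) (g : G) :
    (∑ h : G, ((α h : ℂ)) • MonoidAlgebra.of ℂ G h) * MonoidAlgebra.of ℂ G g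
      = ((α g : ℂ))⁻¹ • ∑ h : G, ((α h : ℂ)) • MonoidAlgebra.of ℂ G h := by
  rw [Finset.sum_mul, Finset.smul_sum]
  refine Fintype.sum_equiv (Equiv.mulRight g) _ _ fun h => ?_
  rw [smul_mul_assoc, ← _root_.map_mul, smul_smul]
  congr 1
  simp only [Equiv.coe_mulRight]
  rw [_root_.map_mul]
  rw [Units.val_mul]
  field_simp

lemma s_mul_s (α : G →* ℂˣ) :
    (∑ h : G, ((α h : ℂ)) • MonoidAlgebra.of ℂ G h) *
        (∑ h : G, ((α h : ℂ)) • MonoidAlgebra.of ℂ G h)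
      = (Fintype.card G : ℂ) • ∑ h : G, ((α h : ℂ)) • MonoidAlgebra.of ℂ G h := by
  rw [Finset.mul_sum]
  have : ∀ g : G, (∑ h : G, ((α h : ℂ)) • MonoidAlgebra.of ℂ G h) * (((α g : ℂ)) • MonoidAlgebra.of ℂ G g)
      = ∑ h : G, ((α h : ℂ)) • MonoidAlgebra.of ℂ G h := by
    intro g
    rw [mul_smul_comm, s_mul_of α g, smul_smul, mul_inv_cancel₀ (Units.ne_zero (α g)), one_smul]
  simp_rw [this]
  rw [Finset.sum_const, Finset.card_univ, Nat.cast_smul_eq_nsmul]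

end AuxLemmas

/-- **The matrices `G_α^ε` are, up to the scalar `r·(1 + n·(μ_α^ε)²)`,
idempotents.** -/
theorem stmt3 {G : Type*} [CommGroup G] [Fintype G] [DecidableEq G]
    (n : ℕ) (hn : 1 ≤ n)
    (B : Matrix (Fin (n + 1)) (Fin (n + 1)) (MonoidAlgebra ℂ G))
    (hR1 : ∀ i, B i i = 0)
    (hR23 : ∀ i j, i ≠ j → ∃ g : G,
        B i j = MonoidAlgebra.of ℂ G g ∧ B j i = MonoidAlgebra.of ℂ G g⁻¹)
    (c : G → ℝ) (hcsym : ∀ g : G, c g⁻¹ = c g)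
    (hB2 : B * B =
        (n : ℂ) • (1 : Matrix (Fin (n + 1)) (Fin (n + 1)) (MonoidAlgebra ℂ G)) +
          ∑ g : G, (c g : ℂ) • (MonoidAlgebra.of ℂ G g • B))
    (α : G →* ℂˣ)
    (chat : ℝ)
    (hchat : (chat : ℂ) = ∑ h : G, (c h : ℂ) * (starRingEnd ℂ) ((α h : ℂ)))
    (ε : ℝ) (hε : ε = 1 ∨ ε = -1)
    (μ : ℝ) (hμ : μ = (chat + ε * Real.sqrt (chat ^ 2 + 4 * n)) / (2 * n))
    (Gm : Matrix (Fin (n + 1) × G) (Fin (n + 1) × G) ℂ)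
    (hGm : Gm =
        ∑ g : G, ((α g : ℂ)) •
            regLift (MonoidAlgebra.of ℂ G g •
              (1 : Matrix (Fin (n + 1)) (Fin (n + 1)) (MonoidAlgebra ℂ G))) +
          (μ : ℂ) • ∑ g : G, ((α g : ℂ)) • regLift (MonoidAlgebra.of ℂ G g • B))
    (E : Matrix (Fin (n + 1) × G) (Fin (n + 1) × G) ℂ)
    (hE : E = (1 / ((Fintype.card G : ℂ) * (1 + (n : ℂ) * (μ : ℂ) ^ 2))) • Gm) :
    Gm * Gm = ((Fintype.card G : ℂ) * (1 + (n : ℂ) * (μ : ℂ) ^ 2)) • Gm ∧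
      (1 : ℝ) ≤ 1 + (n : ℝ) * μ ^ 2 ∧ E * E = E := by
  -- notation
  set s : MonoidAlgebra ℂ G := ∑ h : G, ((α h : ℂ)) • MonoidAlgebra.of ℂ G h with hs
  set μ' : ℂ := (μ : ℂ) with hμ'
  -- the key quadratic identity for μ
  have hnR : (0:ℝ) < (n:ℝ) := by exact_mod_cast Nat.lt_of_lt_of_le Nat.zero_lt_one hn
  have hD : (0:ℝ) ≤ chat ^ 2 + 4 * n := by positivity
  have hsq : (Real.sqrt (chat ^ 2 + 4 * n)) ^ 2 = chat ^ 2 + 4 * n := Real.sq_sqrt hD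
  have hε2 : ε ^ 2 = 1 := by rcases hε with h | h <;> rw [h] <;> norm_num
  have h2 : 2 * n * μ - chat = ε * Real.sqrt (chat ^ 2 + 4 * n) := by
    rw [hμ]; field_simp; ring
  have h3 : (2 * n * μ - chat) ^ 2 = chat ^ 2 + 4 * n := by
    rw [h2, mul_pow, hsq, hε2, one_mul]
  have h4 : (4 * (n:ℝ)) * ((n:ℝ) * μ ^ 2 - chat * μ - 1) = 0 := by linear_combination h3
  have hkey : (n:ℝ) * μ ^ 2 = chat * μ + 1 := by
    rcases mul_eq_zero.mp h4 with h | h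
    · exfalso; nlinarith
    · linarith
  have keyC : (n:ℂ) * μ' ^ 2 = (chat:ℂ) * μ' + 1 := by
    have := congrArg (fun x : ℝ => (x : ℂ)) hkey
    push_cast at this
    simpa [hμ'] using this
  -- chat as a sum of inverse character values
  have hchat' : (chat : ℂ) = ∑ g : G, (c g : ℂ) * ((α g : ℂ))⁻¹ := by
    rw [hchat]
    exact Finset.sum_congr rfl fun g _ => by rw [conj_alpha]
  -- the matrix N := s • (1 + μ' B)
  set M : Matrix (Fin (n + 1)) (Fin (n + 1)) (MonoidAlgebra ℂ G) := (1 : Matrix (Fin (n + 1)) (Fin (n + 1)) (MonoidAlgebra ℂ G)) + μ' • B with hM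
  set N := s • M with hNdef
  have hN : N = s • (1 : Matrix (Fin (n + 1)) (Fin (n + 1)) (MonoidAlgebra ℂ G)) + μ' • (s • B) := by
    rw [hNdef, hM, smul_add, smul_comm]
  -- Gm = regLift N
  have hsum : ∀ X : Matrix (Fin (n + 1)) (Fin (n + 1)) (MonoidAlgebra ℂ G), (∑ g : G, ((α g : ℂ)) • regLift (MonoidAlgebra.of ℂ G g • X))
      = regLift (s • X) := by
    intro X
    rw [hs, Finset.sum_smul, regLift_sum]
    exact Finset.sum_congr rfl fun g _ => by rw [smul_assoc, regLift_smul]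
  have hA : Gm = regLift N := by
    rw [hGm, hsum, hsum, ← regLift_smul, ← regLift_add]
    congr 1
    rw [hN]
  -- character-twisted sum collapses
  have hsof : ∀ g : G, s * MonoidAlgebra.of ℂ G g = ((α g : ℂ))⁻¹ • s := s_mul_of α
  have hss : s * s = (Fintype.card G : ℂ) • s := s_mul_s α
  have hsB2 : s • (∑ g : G, (c g : ℂ) • (MonoidAlgebra.of ℂ G g • B))
      = (chat : ℂ) • (s • B) := by
    rw [Finset.smul_sum]
    have hterm : ∀ g : G, s • ((c g : ℂ) • (MonoidAlgebra.of ℂ G g • B))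
        = ((c g : ℂ) * ((α g : ℂ))⁻¹) • (s • B) := by
      intro g
      rw [smul_comm s ((c g : ℂ)), smul_smul s, hsof g, smul_assoc, smul_smul]
    simp_rw [hterm]
    rw [← Finset.sum_smul, ← hchat']
  -- square of M
  have hMM : M * M = (1 : Matrix (Fin (n + 1)) (Fin (n + 1)) (MonoidAlgebra ℂ G)) + (2 * μ') • B + (μ' ^ 2) • (B * B) := by
    rw [hM]
    simp only [Matrix.add_mul, Matrix.mul_add, Matrix.one_mul, Matrix.mul_one,
      Matrix.smul_mul, Matrix.mul_smul]
    module
  have key2 : 2 * μ' + (chat : ℂ) * μ' ^ 2 = (1 + (n:ℂ) * μ' ^ 2) * μ' := by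
    linear_combination (-μ') * keyC
  have hcomm : ∀ (z : ℂ) (X : Matrix (Fin (n + 1)) (Fin (n + 1)) (MonoidAlgebra ℂ G)), s • (z • X) = z • (s • X) :=
    fun z X => smul_comm s z X
  have step : s • (M * M) = (1 + (n:ℂ) * μ' ^ 2) • N := by
    have hR : (1 + (n:ℂ) * μ' ^ 2) • N
        = (1 + (n:ℂ) * μ' ^ 2) • (s • (1 : Matrix (Fin (n + 1)) (Fin (n + 1)) (MonoidAlgebra ℂ G)))
          + (2 * μ' + (chat:ℂ) * μ' ^ 2) • (s • B) := by
      rw [hN, smul_add, smul_smul, ← key2]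
    rw [hR, hMM, hB2]
    simp only [smul_add, hcomm, hsB2]
    set a := s • (1 : Matrix (Fin (n + 1)) (Fin (n + 1)) (MonoidAlgebra ℂ G)) with ha
    set b := s • B with hb
    module
  have hNN : N * N = ((Fintype.card G : ℂ) * (1 + (n:ℂ) * μ' ^ 2)) • N := by
    calc N * N = (s * s) • (M * M) := by
          rw [hNdef, Matrix.smul_mul, Matrix.mul_smul, smul_smul]
      _ = (Fintype.card G : ℂ) • (s • (M * M)) := by rw [hss, smul_assoc]
      _ = (Fintype.card G : ℂ) • ((1 + (n:ℂ) * μ' ^ 2) • N) := by rw [step]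
      _ = _ := by rw [smul_smul]
  have hGm2 : Gm * Gm = ((Fintype.card G : ℂ) * (1 + (n:ℂ) * μ' ^ 2)) • Gm := by
    rw [hA, ← regLift_mul, hNN, regLift_smul]
  have hge : (1:ℝ) ≤ 1 + (n:ℝ) * μ ^ 2 := by nlinarith [sq_nonneg μ]
  refine ⟨hGm2, hge, ?_⟩
  -- idempotency of E
  have hk0 : ((Fintype.card G : ℂ) * (1 + (n:ℂ) * μ' ^ 2)) ≠ 0 := by
    apply mul_ne_zero
    · exact_mod_cast Fintype.card_ne_zero
    · have : (1 + (n:ℂ) * μ' ^ 2) = ((1 + (n:ℝ) * μ ^ 2 : ℝ) : ℂ) := by push_cast [hμ']; ring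
      rw [this, Complex.ofReal_ne_zero]
      linarith
  rw [hE, Matrix.smul_mul, Matrix.mul_smul, hGm2, smul_smul, smul_smul]
  congr 1
  field_simp

end
end

section
/- Let G be a finite abelian group, Ω a finite set, and T : G → ℂ^{Ω×Ω} a family of permutation matrices with T_g·T_h = T_{gh} for all g, h. Let S, S' : G → ℂ^{Ω×Ω} both satisfy T_h·S_g = S_{hg} and S_g·T_h = S_{gh} for all g, h ∈ G (and likewise for S'), and let Ω̃₁ ⊆ Ω be such that the map Ω̃₁ × G → Ω, (x, g) ↦ x^g, is a bijection. If (S_ℓ)_{x,y} = (S'_ℓ)_{x,y} for all ℓ ∈ G and all x, y ∈ Ω̃₁, then S_g = S'_g for every g ∈ G. (A commutative association scheme whose thin radical acts regularly on the thick relations is uniquely recoverable from the thin radical and the restriction of its relations to the neighbourhood of a vertex with respect to a thick relation.) -/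
/-!
Left and right multiplication by the permutation matrix `T_a` permute the rows and columns of a
matrix, so the two equivariance laws give `S_g (x^a, y^b) = S_{a g b⁻¹} (x, y)`. Since every point
of `Ω` is of the form `x^a` with `x ∈ Ω̃₁`, each entry of `S_g` is an entry of some `S_ℓ` on
`Ω̃₁ × Ω̃₁`, where `S` and `S'` agree.
-/

open Matrix

theorem eq_toPEquiv_toMatrix_of_apply {Ω α : Type*} [DecidableEq Ω] [Zero α] [One α]
    {e : Ω ≃ Ω} {P : Matrix Ω Ω α} (hP : ∀ x y, P x y = if e x = y then 1 else 0) :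
    P = e.toPEquiv.toMatrix := by
  ext x y
  simp [hP, PEquiv.toMatrix_apply]

section PermutationEquivariant

variable {G Ω α : Type*} [Group G] [Fintype Ω] [DecidableEq Ω] [NonAssocSemiring α]
  {σ : G → Equiv.Perm Ω} {T R : G → Matrix Ω Ω α}

theorem apply_perm_perm_of_equivariant (hσ : ∀ g, T g = (σ g).toPEquiv.toMatrix)
    (hTR : ∀ g h, T h * R g = R (h * g)) (hRT : ∀ g h, R g * T h = R (g * h))
    (g a b : G) (x y : Ω) : R g (σ a x) (σ b y) = R (a * g * b⁻¹) x y := by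
  have hrow : R (a * g) x (σ b y) = R g (σ a x) (σ b y) := by
    rw [← hTR, hσ, PEquiv.toMatrix_toPEquiv_mul, submatrix_apply, id]
  have hcol : R (a * g * b⁻¹ * b) x (σ b y) = R (a * g * b⁻¹) x y := by
    rw [← hRT, hσ, PEquiv.mul_toMatrix_toPEquiv, submatrix_apply, id, Equiv.symm_apply_apply]
  rw [← hrow, ← hcol, inv_mul_cancel_right]

theorem eq_of_equivariant_of_eqOn_transversal {R' : G → Matrix Ω Ω α}
    (hσ : ∀ g, T g = (σ g).toPEquiv.toMatrix)
    (hTR : ∀ g h, T h * R g = R (h * g)) (hRT : ∀ g h, R g * T h = R (g * h))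
    (hTR' : ∀ g h, T h * R' g = R' (h * g)) (hRT' : ∀ g h, R' g * T h = R' (g * h))
    {Ω₁ : Set Ω} (hsurj : Function.Surjective (fun p : Ω₁ × G => σ p.2 p.1))
    (heq : ∀ (ℓ : G) (x y : Ω₁), R ℓ x y = R' ℓ x y) : R = R' := by
  funext g
  ext x y
  obtain ⟨⟨x₁, a⟩, rfl⟩ := hsurj x
  obtain ⟨⟨y₁, b⟩, rfl⟩ := hsurj y
  rw [apply_perm_perm_of_equivariant hσ hTR hRT, apply_perm_perm_of_equivariant hσ hTR' hRT',
    heq]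

end PermutationEquivariant

theorem stmt7_general {G : Type*} [CommGroup G]
    {Ω : Type*} [Fintype Ω] [DecidableEq Ω]
    (T S S' : G → Matrix Ω Ω ℂ)
    (σ : G → Equiv.Perm Ω)
    (hσ : ∀ (g : G) (x y : Ω), T g x y = if σ g x = y then 1 else 0)
    (hTS : ∀ g h : G, T h * S g = S (h * g))
    (hST : ∀ g h : G, S g * T h = S (g * h))
    (hTS' : ∀ g h : G, T h * S' g = S' (h * g))
    (hST' : ∀ g h : G, S' g * T h = S' (g * h))
    (Ω₁ : Set Ω)
    (hbij : Function.Bijective (fun p : Ω₁ × G => σ p.2 p.1))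
    (heq : ∀ (ℓ : G) (x y : Ω₁), S ℓ (x : Ω) (y : Ω) = S' ℓ (x : Ω) (y : Ω)) :
    ∀ g : G, S g = S' g :=
  congrFun <| eq_of_equivariant_of_eqOn_transversal
    (fun g => eq_toPEquiv_toMatrix_of_apply (hσ g)) hTS hST hTS' hST' hbij.surjective heq

/-- **Unique recoverability**: a scheme whose thin radical acts regularly on the
thick relations is determined by the restriction of the thick relations to the
neighbourhood `Ω̃₁`. -/
theorem stmt7 {G : Type*} [CommGroup G] [Fintype G] [DecidableEq G]
    {Ω : Type*} [Fintype Ω] [DecidableEq Ω]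
    (T S S' : G → Matrix Ω Ω ℂ)
    (σ : G → Equiv.Perm Ω)
    (hσ : ∀ (g : G) (x y : Ω), T g x y = if σ g x = y then 1 else 0)
    (hT : ∀ g h : G, T g * T h = T (g * h))
    (hTS : ∀ g h : G, T h * S g = S (h * g))
    (hST : ∀ g h : G, S g * T h = S (g * h))
    (hTS' : ∀ g h : G, T h * S' g = S' (h * g))
    (hST' : ∀ g h : G, S' g * T h = S' (g * h))
    (Ω₁ : Set Ω)
    (hbij : Function.Bijective (fun p : Ω₁ × G => σ p.2 p.1))
    (heq : ∀ (ℓ : G) (x y : Ω₁), S ℓ (x : Ω) (y : Ω) = S' ℓ (x : Ω) (y : Ω)) :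
    ∀ g : G, S g = S' g :=
  stmt7_general T S S' σ hσ hTS hST hTS' hST' Ω₁ hbij heq
end

section
/- Let G be a finite abelian group, Ω a finite set, and T, S : G → ℂ^{Ω×Ω} families of matrices with: each T_g a permutation matrix and T_g·T_h = T_{gh}; each S_g a 0-1 matrix; Σ_{g∈G} T_g + Σ_{g∈G} S_g = J (the all-ones matrix); T_h·S_g = S_{hg} and S_g·T_h = S_{gh} for all g, h ∈ G; and S_gᵀ = S_{g⁻¹} for all g ∈ G. Fix z ∈ Ω, let Ω₁ := {y ∈ Ω : (S_1)_{z,y} = 1}, Ω̃₁ := {z} ∪ Ω₁, and let A_ℓ ∈ ℂ^{Ω₁×Ω₁} be the restriction of S_{ℓ⁻¹} to Ω₁ × Ω₁. Then: (0) the map Ω̃₁ × G → Ω, (x, g) ↦ x^g, is a bijection; (i) A_ℓᵀ = A_{ℓ⁻¹} for all ℓ ∈ G; (ii) the restriction Ã_ℓ of S_{ℓ⁻¹} to Ω̃₁ × Ω̃₁ has the bordered form (Ã_ℓ)_{z,z} = 0, (Ã_ℓ)_{z,y} = (Ã_ℓ)_{y,z} = δ_{ℓ,1} for y ∈ Ω₁,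 with Ω₁ × Ω₁ block equal to A_ℓ; (iii) identifying Ω with Ω̃₁ × G via the bijection of (0), T_g = I ⊗ P_g and S_g = Σ_{ℓ∈G} Ã_ℓ ⊗ P_{gℓ}. (Hence a roux scheme whose thick neighbourhood of a vertex induces an association scheme with |G| classes is the roux scheme obtained from that local scheme by the bordered roux-matrix construction.) -/
/-!
The `2|G|` zero-one matrices `T_g`, `S_g` sum to `J`, so every pair `(x, y)` carries a
unique label `g ∈ G`: either `x^g = y` or `(S_g)_{x,y} = 1`. Because `S_g T_h = S_{gh}`, the
pair `(z, x^g)` has label `g` exactly when `x = z` or `(S_1)_{z,x} = 1`, i.e. when `x ∈ Ω̃₁`.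
Reading off the label of `(z, w)` therefore writes every `w` uniquely as `x^g` with `x ∈ Ω̃₁`.
In these coordinates the two shift relations give `(S_g)_{x^h, y^k} = (S_{h g k⁻¹})_{x,y}`,
which is the Kronecker decomposition, and uniqueness of the labels of `(z, z)` and `(z, y)`
gives the bordered form.
-/

open Matrix Equiv

theorem existsUnique_eq_one_of_sum_eq_one {ι R : Type*} [Fintype ι] [AddCommMonoidWithOne R]
    [CharZero R] {f : ι → R} (h01 : ∀ i, f i = 0 ∨ f i = 1) (hsum : ∑ i, f i = 1) :
    ∃! i, f i = 1 := by
  classical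
  have hboole : ∑ i, f i = ∑ i, if f i = 1 then (1 : R) else 0 :=
    Finset.sum_congr rfl fun i _ => by rcases h01 i with h | h <;> simp [h]
  rw [hboole, Finset.sum_boole, Nat.cast_eq_one] at hsum
  exact (Fintype.existsUnique_iff_card_one _).2 hsum

section PermMatrix

variable {Ω R : Type*} [DecidableEq Ω]

theorem Equiv.Perm.permMatrix_apply [Zero R] [One R] (σ : Perm Ω) (x y : Ω) :
    σ.permMatrix R x y = if σ x = y then 1 else 0 := by
  simp [PEquiv.toMatrix_apply, Equiv.toPEquiv_apply]

theorem Equiv.Perm.permMatrix_injective [MulZeroOneClass R] [Nontrivial R] :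
    Function.Injective (fun σ : Perm Ω => σ.permMatrix R) := fun σ τ h =>
  Equiv.ext fun x => Option.some_injective _ <| by
    simpa only [Equiv.toPEquiv_apply] using PEquiv.ext_iff.1 (PEquiv.toMatrix_injective h) x

variable [Fintype Ω] [NonAssocSemiring R] [Nontrivial R] {G : Type*} {σ : G → Perm Ω}

theorem perm_mul_of_permMatrix_mul [Mul G]
    (hσ : ∀ g h, (σ g).permMatrix R * (σ h).permMatrix R = (σ (g * h)).permMatrix R)
    (g h : G) : σ (g * h) = σ h * σ g :=
  Perm.permMatrix_injective (R := R) <| by dsimp only; rw [Matrix.permMatrix_mul, hσ]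

theorem perm_one_of_permMatrix_mul [Monoid G]
    (hσ : ∀ g h, (σ g).permMatrix R * (σ h).permMatrix R = (σ (g * h)).permMatrix R) :
    σ 1 = 1 := by
  simpa using perm_mul_of_permMatrix_mul hσ 1 1

end PermMatrix

theorem bijective_prod_of_levels {G Ω : Type*} (σ : G → Perm Ω) (P : G → Ω → Prop)
    (Q : Set Ω) (hP : ∀ g x, P g (σ g x) ↔ x ∈ Q) (hex : ∀ w, ∃ g, P g w)
    (huniq : ∀ g h w, P g w → P h w → g = h) :
    Function.Bijective (fun p : Q × G => σ p.2 p.1) := by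
  constructor
  · rintro ⟨⟨x, hx⟩, g⟩ ⟨⟨y, hy⟩, h⟩ (hxy : σ g x = σ h y)
    obtain rfl : g = h := huniq _ _ _ ((hP g x).2 hx) (hxy ▸ (hP h y).2 hy)
    obtain rfl : x = y := (σ g).injective hxy
    rfl
  · intro w
    obtain ⟨g, hg⟩ := hex w
    exact ⟨(⟨(σ g).symm w, (hP g _).1 (by simpa using hg)⟩, g), by simp⟩

section Scheme

variable {G Ω R : Type*} [DecidableEq Ω] {σ : G → Perm Ω} {S : G → Matrix Ω Ω R}

section Shift

variable [Fintype Ω] [Group G] [NonAssocSemiring R]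

theorem apply_perm_left (hTS : ∀ g h, (σ h).permMatrix R * S g = S (h * g))
    (g h : G) (x y : Ω) :
    S g (σ h x) y = S (h * g) x y := by
  rw [← hTS, PEquiv.toMatrix_toPEquiv_mul, submatrix_apply, id]

theorem apply_perm_right (hST : ∀ g h, S g * (σ h).permMatrix R = S (g * h))
    (g h : G) (x y : Ω) :
    S (g * h) x (σ h y) = S g x y := by
  rw [← hST, PEquiv.mul_toMatrix_toPEquiv, submatrix_apply, id, Equiv.symm_apply_apply]

theorem apply_perm_perm (hTS : ∀ g h, (σ h).permMatrix R * S g = S (h * g))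
    (hST : ∀ g h, S g * (σ h).permMatrix R = S (g * h)) (g h k : G) (x y : Ω) :
    S g (σ h x) (σ k y) = S (h * g * k⁻¹) x y := by
  rw [apply_perm_left hTS, ← apply_perm_right hST (h * g * k⁻¹) k, inv_mul_cancel_right]

theorem perm_apply_eq_or_entry_eq_one_iff (hST : ∀ g h, S g * (σ h).permMatrix R = S (g * h))
    (g : G) (z x : Ω) : (σ g z = σ g x ∨ S g z (σ g x) = 1) ↔ (x = z ∨ S 1 z x = 1) := by
  rw [(σ g).apply_eq_iff_eq, ← apply_perm_right hST 1 g, one_mul, eq_comm]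

end Shift

section Labels

def UniquelyLabelled [Zero R] [One R] (σ : G → Perm Ω) (S : G → Matrix Ω Ω R) : Prop :=
  ∀ x y, ∃! i : G ⊕ G, Sum.elim (fun g => (σ g).permMatrix R) S i x y = 1

theorem uniquelyLabelled_of_sum_eq_one [Fintype G] [AddCommMonoidWithOne R] [CharZero R]
    (hS01 : ∀ g x y, S g x y = 0 ∨ S g x y = 1)
    (hJ : ∀ x y, (∑ g, (σ g).permMatrix R x y) + ∑ g, S g x y = 1) :
    UniquelyLabelled σ S := fun x y => by
  refine existsUnique_eq_one_of_sum_eq_one (fun i => ?_)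
    (by rw [Fintype.sum_sum_type]; exact hJ x y)
  rcases i with g | g
  · simp only [Sum.elim_inl, Perm.permMatrix_apply]
    split_ifs <;> simp
  · exact hS01 g x y

variable [Zero R] [One R]

theorem eq_of_perm_or_entry_eq_one (hlabel : UniquelyLabelled σ S) {g h : G} {x y : Ω}
    (hg : σ g x = y ∨ S g x y = 1) (hh : σ h x = y ∨ S h x y = 1) : g = h := by
  obtain ⟨i, -, hi⟩ := hlabel x y
  have hlevel : ∀ {g}, (σ g x = y ∨ S g x y = 1) → Sum.elim id id i = g := by
    rintro g (hg | hg)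
    · rw [← hi (.inl g) (by simp [hg])]; rfl
    · rw [← hi (.inr g) hg]; rfl
  exact (hlevel hg).symm.trans (hlevel hh)

theorem exists_perm_or_entry_eq_one [NeZero (1 : R)] (hlabel : UniquelyLabelled σ S)
    (x y : Ω) : ∃ g, σ g x = y ∨ S g x y = 1 := by
  obtain ⟨g | g, hi, -⟩ := hlabel x y
  · refine ⟨g, .inl ?_⟩
    by_contra hne
    simp [hne] at hi
  · exact ⟨g, .inr hi⟩

theorem entry_eq_zero_of_perm (hlabel : UniquelyLabelled σ S)
    (hS01 : ∀ g x y, S g x y = 0 ∨ S g x y = 1) {g : G} {x y : Ω}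
    (hg : σ g x = y) (h : G) : S h x y = 0 :=
  (hS01 h x y).resolve_right fun hh =>
    Sum.inl_ne_inr <| (hlabel x y).unique (y₁ := .inl g) (by simp [hg]) hh

theorem entry_eq_ite [DecidableEq G] (hlabel : UniquelyLabelled σ S)
    (hS01 : ∀ g x y, S g x y = 0 ∨ S g x y = 1) {h : G} {x y : Ω}
    (hh : S h x y = 1) (g : G) : S g x y = if g = h then 1 else 0 := by
  split_ifs with hgh
  · rwa [hgh]
  · exact (hS01 g x y).resolve_right fun hg =>
      hgh (eq_of_perm_or_entry_eq_one hlabel (.inr hg) (.inr hh))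

end Labels

section Kronecker

variable [DecidableEq G] [NonAssocSemiring R] {Q : Set Ω}

theorem permMatrix_submatrix_eq_one_kronecker [Mul G] (hσ : ∀ g h, σ (g * h) = σ h * σ g)
    (hinj : Function.Injective fun p : Q × G => σ p.2 p.1) (g : G) :
    ((σ g).permMatrix R).submatrix (fun p : Q × G => σ p.2 p.1) (fun p : Q × G => σ p.2 p.1) =
      kroneckerMap (· * ·) (1 : Matrix Q Q R) (of fun h k : G => if h * g = k then 1 else 0) := by
  ext ⟨x, h⟩ ⟨y, k⟩
  have hiff : σ (h * g) x = σ k y ↔ (x, h * g) = (y, k) :=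
    hinj.eq_iff (a := (x, h * g)) (b := (y, k))
  simp only [submatrix_apply, kroneckerMap_apply, of_apply, Perm.permMatrix_apply, one_apply,
    ← Perm.mul_apply, ← hσ, hiff, Prod.mk.injEq, ite_and]
  split_ifs <;> simp

theorem submatrix_eq_sum_kronecker [Fintype Ω] [CommGroup G] [Fintype G]
    (hTS : ∀ g h, (σ h).permMatrix R * S g = S (h * g))
    (hST : ∀ g h, S g * (σ h).permMatrix R = S (g * h)) (g : G) :
    (S g).submatrix (fun p : Q × G => σ p.2 p.1) (fun p : Q × G => σ p.2 p.1) =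
      ∑ ℓ : G, kroneckerMap (· * ·) (of fun x y : Q => S ℓ⁻¹ x y)
        (of fun h k : G => if h * (g * ℓ) = k then 1 else 0) := by
  ext ⟨x, h⟩ ⟨y, k⟩
  have hcond : ∀ ℓ, h * (g * ℓ) = k ↔ ℓ = (h * g)⁻¹ * k := by
    simp [eq_inv_mul_iff_mul_eq, mul_assoc]
  simp only [submatrix_apply, Matrix.sum_apply, kroneckerMap_apply, of_apply,
    apply_perm_perm hTS hST, hcond, mul_ite, mul_one, mul_zero, Finset.sum_ite_eq',
    Finset.mem_univ, if_true]
  rw [_root_.mul_inv_rev, inv_inv, mul_comm]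

end Kronecker

end Scheme

/-- **A roux scheme carrying a local scheme with `|G|` classes comes from the
bordered roux-matrix construction.** Here `Ω₁ = S_1(z)`, `Ω̃₁ = {z} ∪ Ω₁`,
`A_ℓ` is the restriction of `S_{ℓ⁻¹}` to `Ω₁ × Ω₁` and `Ã_ℓ` its bordered
extension to `Ω̃₁ × Ω̃₁`. -/
theorem stmt8 {G : Type*} [CommGroup G] [Fintype G] [DecidableEq G]
    {Ω : Type*} [Fintype Ω] [DecidableEq Ω]
    (T S : G → Matrix Ω Ω ℂ)
    (σ : G → Equiv.Perm Ω)
    (hσ : ∀ (g : G) (x y : Ω), T g x y = if σ g x = y then 1 else 0)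
    (hT : ∀ g h : G, T g * T h = T (g * h))
    (hS01 : ∀ (g : G) (x y : Ω), S g x y = 0 ∨ S g x y = 1)
    (hJ : ∀ x y : Ω, (∑ g : G, T g x y) + ∑ g : G, S g x y = 1)
    (hTS : ∀ g h : G, T h * S g = S (h * g))
    (hST : ∀ g h : G, S g * T h = S (g * h))
    (hStrans : ∀ g : G, (S g)ᵀ = S g⁻¹)
    (z : Ω)
    (Ω₁ : Set Ω) (hΩ₁ : Ω₁ = {y : Ω | S 1 z y = 1})
    (Ωt : Set Ω) (hΩt : Ωt = insert z Ω₁) :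
    -- (0) the map `(x, g) ↦ x^g` is a bijection
    Function.Bijective (fun p : Ωt × G => σ p.2 p.1) ∧
    -- (i) `A_ℓᵀ = A_{ℓ⁻¹}`
    (∀ ℓ : G, (Matrix.of fun x y : Ω₁ => S ℓ⁻¹ (x : Ω) (y : Ω))ᵀ =
        Matrix.of fun x y : Ω₁ => S ℓ (x : Ω) (y : Ω)) ∧
    -- (ii) the restriction of `S_{ℓ⁻¹}` to `Ω̃₁ × Ω̃₁` has the bordered form
    (∀ ℓ : G, S ℓ⁻¹ z z = 0 ∧
        ∀ y ∈ Ω₁, S ℓ⁻¹ z y = (if ℓ = 1 then 1 else 0) ∧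
          S ℓ⁻¹ y z = (if ℓ = 1 then 1 else 0)) ∧
    -- (iii) `T_g = I ⊗ P_g` and `S_g = Σ_ℓ Ã_ℓ ⊗ P_{gℓ}`
    (∀ g : G,
        (T g).submatrix (fun p : Ωt × G => σ p.2 p.1) (fun p : Ωt × G => σ p.2 p.1) =
          Matrix.kroneckerMap (· * ·) (1 : Matrix Ωt Ωt ℂ)
            (Matrix.of fun h k : G => if h * g = k then 1 else 0)) ∧
    (∀ g : G,
        (S g).submatrix (fun p : Ωt × G => σ p.2 p.1) (fun p : Ωt × G => σ p.2 p.1) =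
          ∑ ℓ : G, Matrix.kroneckerMap (· * ·)
            (Matrix.of fun x y : Ωt => S ℓ⁻¹ (x : Ω) (y : Ω))
            (Matrix.of fun h k : G => if h * (g * ℓ) = k then 1 else 0)) := by
  obtain rfl : T = fun g => (σ g).permMatrix ℂ :=
    funext fun g => Matrix.ext fun x y => by rw [hσ, Perm.permMatrix_apply]
  beta_reduce at hT hJ hTS hST
  subst hΩ₁ hΩt
  have hlabel := uniquelyLabelled_of_sum_eq_one hS01 hJ
  have hbij :
      Function.Bijective fun p : (insert z {y | S 1 z y = 1} : Set Ω) × G => σ p.2 p.1 :=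
    bijective_prod_of_levels σ (fun g w => σ g z = w ∨ S g z w = 1) _
      (fun g x => perm_apply_eq_or_entry_eq_one_iff hST g z x)
      (exists_perm_or_entry_eq_one hlabel z) (fun _ _ _ => eq_of_perm_or_entry_eq_one hlabel)
  have hS_z_z : ∀ g, S g z z = 0 :=
    entry_eq_zero_of_perm hlabel hS01 (g := 1) (by simp [perm_one_of_permMatrix_mul hT])
  have hS_swap : ∀ g x y, S g⁻¹ y x = S g x y := fun g x y => by rw [← hStrans]; rfl
  refine ⟨hbij, fun ℓ => ?_, fun ℓ => ⟨hS_z_z ℓ⁻¹, fun y hy => ?_⟩,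
    permMatrix_submatrix_eq_one_kronecker (perm_mul_of_permMatrix_mul hT) hbij.injective,
    submatrix_eq_sum_kronecker hTS hST⟩
  · ext x y
    exact hS_swap ℓ x y
  · rw [hS_swap ℓ z y, entry_eq_ite hlabel hS01 hy, entry_eq_ite hlabel hS01 hy]
    simp only [inv_eq_one, and_self]
end

section
/- Let G be a finite abelian group, Ω a finite set, and T : G → ℂ^{Ω×Ω} a family of permutation matrices with T_g·T_h = T_{gh} for all g, h. Let 𝒮 be a finite set of matrices in ℂ^{Ω×Ω} such that: (a) T_g·M ∈ 𝒮 for all g ∈ G and M ∈ 𝒮; (b) for all M, M' ∈ 𝒮 there is exactly one g ∈ G with T_g·M = M' (the action of G on 𝒮 is regular); (c) T_g·M = M·T_g for all g ∈ G and M ∈ 𝒮; and (d) some M₀ ∈ 𝒮 is symmetric (M₀ᵀ = M₀). Then there is a bijection S : G → 𝒮 with T_g·S_h = S_{gh} and (S_g)ᵀ = S_{g⁻¹} for all g, h ∈ G. (In a roux scheme, the thick relations can be labeled by the thin radical G so that T_g S_h = S_{gh} and S_gᵀ = S_{g⁻¹}.) -/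
/-!
Label `𝒮` by the orbit map `g ↦ T_g M₀` of a symmetric `M₀ ∈ 𝒮`; regularity of the action makes
it a bijection. Permutation matrices are orthogonal, so `T_gᵀ = T_{g⁻¹}`, and then
`(T_g M₀)ᵀ = M₀ T_{g⁻¹} = T_{g⁻¹} M₀` because `T_{g⁻¹}` commutes with `M₀`.
-/

open Matrix

namespace Matrix

variable {n R : Type*} [DecidableEq n]

theorem eq_permMatrix_of_apply [Zero R] [One R] {P : Matrix n n R} {σ : Equiv.Perm n}
    (h : ∀ x y, P x y = if σ x = y then 1 else 0) : P = σ.permMatrix R := by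
  ext x y
  simp [h, Equiv.Perm.permMatrix, PEquiv.toMatrix_apply]

theorem permMatrix_mul_transpose [Fintype n] [NonAssocSemiring R] (σ : Equiv.Perm n) :
    σ.permMatrix R * (σ.permMatrix R)ᵀ = 1 := by
  rw [transpose_permMatrix, ← permMatrix_mul, inv_mul_cancel, permMatrix_one]

theorem transpose_eq_inv_of_mul_transpose_eq_one [Fintype n] [Semiring R] {G : Type*} [Group G]
    {T : G → Matrix n n R} (hT : ∀ g h, T g * T h = T (g * h)) (hTT : ∀ g, T g * (T g)ᵀ = 1)
    (g : G) : (T g)ᵀ = T g⁻¹ := by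
  have hT1 : T 1 = 1 :=
    calc T 1 = T 1 * (T 1 * (T 1)ᵀ) := by rw [hTT, mul_one]
      _ = 1 := by rw [← mul_assoc, hT, one_mul, hTT]
  calc (T g)ᵀ = T g⁻¹ * T g * (T g)ᵀ := by rw [hT, inv_mul_cancel, hT1, one_mul]
    _ = T g⁻¹ := by rw [mul_assoc, hTT, mul_one]

end Matrix

theorem stmt9_general {G : Type*} [CommGroup G]
    {Ω : Type*} [Fintype Ω] [DecidableEq Ω]
    (T : G → Matrix Ω Ω ℂ)
    (σ : G → Equiv.Perm Ω)
    (hσ : ∀ (g : G) (x y : Ω), T g x y = if σ g x = y then 1 else 0)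
    (hT : ∀ g h : G, T g * T h = T (g * h))
    (𝒮 : Finset (Matrix Ω Ω ℂ))
    (ha : ∀ g : G, ∀ M ∈ 𝒮, T g * M ∈ 𝒮)
    (hb : ∀ M ∈ 𝒮, ∀ M' ∈ 𝒮, ∃! g : G, T g * M = M')
    (hc : ∀ g : G, ∀ M ∈ 𝒮, T g * M = M * T g)
    (hd : ∃ M ∈ 𝒮, Mᵀ = M) :
    ∃ S : G → Matrix Ω Ω ℂ,
      (∀ g : G, S g ∈ 𝒮) ∧ Function.Injective S ∧ (∀ M ∈ 𝒮, ∃ g : G, S g = M) ∧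
        (∀ g h : G, T g * S h = S (g * h)) ∧ (∀ g : G, (S g)ᵀ = S g⁻¹) := by
  obtain ⟨M₀, hM₀, hM₀_symm⟩ := hd
  have hT_transpose : ∀ g, (T g)ᵀ = T g⁻¹ :=
    transpose_eq_inv_of_mul_transpose_eq_one hT fun g => by
      rw [eq_permMatrix_of_apply (hσ g)]
      exact permMatrix_mul_transpose _
  refine ⟨fun g => T g * M₀, fun g => ha g M₀ hM₀, fun g h hgh => ?_,
    fun M hM => (hb M₀ hM₀ M hM).exists, fun g h => by rw [← mul_assoc, hT], fun g => ?_⟩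
  · exact (hb M₀ hM₀ _ (ha h M₀ hM₀)).unique hgh rfl
  · rw [transpose_mul, hM₀_symm, hT_transpose, ← hc g⁻¹ M₀ hM₀]

/-- **Labeling the thick relations of a roux scheme**: if the thin radical `G`
acts regularly on the set `𝒮` of thick relation matrices, commutes with them,
and `𝒮` contains a symmetric matrix, then the matrices in `𝒮` can be labeled
`S_g` (`g ∈ G`) so that `T_g·S_h = S_{gh}` and `S_gᵀ = S_{g⁻¹}`. -/
theorem stmt9 {G : Type*} [CommGroup G] [Fintype G] [DecidableEq G]
    {Ω : Type*} [Fintype Ω] [DecidableEq Ω]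
    (T : G → Matrix Ω Ω ℂ)
    (σ : G → Equiv.Perm Ω)
    (hσ : ∀ (g : G) (x y : Ω), T g x y = if σ g x = y then 1 else 0)
    (hT : ∀ g h : G, T g * T h = T (g * h))
    (𝒮 : Finset (Matrix Ω Ω ℂ))
    (ha : ∀ g : G, ∀ M ∈ 𝒮, T g * M ∈ 𝒮)
    (hb : ∀ M ∈ 𝒮, ∀ M' ∈ 𝒮, ∃! g : G, T g * M = M')
    (hc : ∀ g : G, ∀ M ∈ 𝒮, T g * M = M * T g)
    (hd : ∃ M ∈ 𝒮, Mᵀ = M) :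
    ∃ S : G → Matrix Ω Ω ℂ,
      (∀ g : G, S g ∈ 𝒮) ∧ Function.Injective S ∧ (∀ M ∈ 𝒮, ∃ g : G, S g = M) ∧
        (∀ g h : G, T g * S h = S (g * h)) ∧ (∀ g : G, (S g)ᵀ = S g⁻¹) :=
  stmt9_general T σ hσ hT 𝒮 ha hb hc hd
end

section
/- Let A_0, A_1, …, A_d be the adjacency matrices of a commutative association scheme on a finite set Ω with |Ω| = n. Let E_0, …, E_d ∈ ℂ^{Ω×Ω} be Hermitian matrices with E_i·E_j = δ_{ij}·E_i for all i, j; suppose E_i = Σ_{r=0}^d Q_{ri}·A_r for a complex (d+1)×(d+1) matrix Q (the second eigenmatrix); suppose E_i ∘ E_j = (1/n)·Σ_{ℓ=0}^d q_{ij}^ℓ·E_ℓ for complex numbers q_{ij}^ℓ (the Krein parameters), where ∘ is the entrywise (Schur) product; and suppose tr(E_k) is a positive real number for every k. Then for all 0 ≤ i, j, k ≤ d: q_{ij}^k = 0 if and only if Σ_{r,s,t=0}^d Q_{ri}·Q_{sj}·conj(Q_{tk})·[r s t]_{u,v,w} = 0 for all u, v, w ∈ Ω. -/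
/-!
Let `X` be the Khatri–Rao product of `E_i` and `E_j`, the `Ω² × Ω` matrix with entries
`X_{(u,v),x} = (E_i)_{ux} (E_j)_{vx}`. Expanding `E_i`, `E_j`, `E_k` in the real 0-1 basis `A_r`,
the sum `Σ Q_{ri} Q_{sj} conj(Q_{tk}) [r s t]_{u,v,w}` is the entry `(X E_k)_{(u,v),w}`. Since the `E_i` are Hermitian idempotents, `Xᴴ X = E_i ∘ E_j`, so
`(X E_k)ᴴ (X E_k) = E_k (E_i ∘ E_j) E_k = n⁻¹ q_{ij}^k E_k`. Hence `X E_k = 0` iff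
`q_{ij}^k E_k = 0`, and `E_k ≠ 0` because its trace is positive.
-/

open scoped BigOperators
open Matrix

noncomputable section

theorem Finset.sum_mul_sum_mul_sum_comm {ι κ R : Type*} [CommSemiring R] (s : Finset ι)
    (t : Finset κ) (a b c : ι → R) (f g h : ι → κ → R) :
    ∑ r ∈ s, ∑ s' ∈ s, ∑ t' ∈ s, a r * b s' * c t' * ∑ x ∈ t, f r x * g s' x * h t' x =
      ∑ x ∈ t, (∑ r ∈ s, a r * f r x) * (∑ s' ∈ s, b s' * g s' x) * (∑ t' ∈ s, c t' * h t' x) := by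
  have hx : ∀ x, (∑ r ∈ s, a r * f r x) * (∑ s' ∈ s, b s' * g s' x) * (∑ t' ∈ s, c t' * h t' x) =
      ∑ r ∈ s, ∑ s' ∈ s, ∑ t' ∈ s, a r * b s' * c t' * (f r x * g s' x * h t' x) := fun x => by
    rw [Finset.sum_mul_sum, Finset.sum_mul]
    simp_rw [Finset.sum_mul_sum]
    exact Finset.sum_congr rfl fun _ _ => Finset.sum_congr rfl fun _ _ =>
      Finset.sum_congr rfl fun _ _ => by ring
  simp_rw [hx, Finset.mul_sum]
  exact (Finset.sum_congr rfl fun _ _ =>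
    (Finset.sum_congr rfl fun _ _ => Finset.sum_comm).trans Finset.sum_comm).trans Finset.sum_comm

namespace Matrix

variable {m m' n ι R : Type*}

def khatriRao [Mul R] (M : Matrix m n R) (N : Matrix m' n R) : Matrix (m × m') n R :=
  of fun p x => M p.1 x * N p.2 x

@[simp]
theorem khatriRao_apply [Mul R] (M : Matrix m n R) (N : Matrix m' n R) (u : m) (v : m') (x : n) :
    khatriRao M N (u, v) x = M u x * N v x :=
  rfl

theorem conjTranspose_khatriRao_mul_khatriRao [Fintype m] [Fintype m'] [CommSemiring R]
    [StarRing R] (M M' : Matrix m n R) (N N' : Matrix m' n R) :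
    (khatriRao M N)ᴴ * khatriRao M' N' = (Mᴴ * M') ⊙ (Nᴴ * N') := by
  ext x y
  simp only [mul_apply, conjTranspose_apply, hadamard_apply, Fintype.sum_prod_type,
    khatriRao_apply, star_mul', Finset.sum_mul_sum]
  exact Finset.sum_congr rfl fun _ _ => Finset.sum_congr rfl fun _ _ => by ring

theorem mul_sum_smul_mul_of_orthogonal [Fintype n] [Fintype ι] [DecidableEq ι] [CommSemiring R]
    {E : ι → Matrix n n R} (horth : ∀ i j, E i * E j = if i = j then E i else 0)
    (c : ι → R) (k : ι) :
    E k * (∑ ℓ, c ℓ • E ℓ) * E k = c k • E k := by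
  rw [Finset.mul_sum, Finset.sum_mul, Finset.sum_eq_single k]
  · rw [Matrix.mul_smul, Matrix.smul_mul, horth, if_pos rfl, horth, if_pos rfl]
  · intro ℓ _ hℓ
    rw [Matrix.mul_smul, Matrix.smul_mul, horth k ℓ, if_neg (Ne.symm hℓ), zero_mul, smul_zero]
  · exact fun h => absurd (Finset.mem_univ k) h

def tripleIntersection [Fintype n] [CommSemiring R] (A : ι → Matrix n n R) (r s t : ι)
    (u v w : n) : R :=
  ∑ x, A r u x * A s v x * A t w x

theorem sum_mul_tripleIntersection [Fintype n] [Fintype ι] [CommSemiring R] [StarRing R]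
    {A : ι → Matrix n n R} (hreal : ∀ r u x, star (A r u x) = A r u x)
    {E : ι → Matrix n n R} (Q : ι → ι → R) (hQ : ∀ i, E i = ∑ r, Q r i • A r)
    (i j k : ι) (hk : (E k)ᴴ = E k) (u v w : n) :
    ∑ r, ∑ s, ∑ t, Q r i * Q s j * starRingEnd R (Q t k) * tripleIntersection A r s t u v w =
      (khatriRao (E i) (E j) * E k) (u, v) w := by
  have hE : ∀ i u x, E i u x = ∑ r, Q r i * A r u x := fun i u x => by
    simp [hQ i, sum_apply]
  have hEk : ∀ x, E k x w = ∑ t, starRingEnd R (Q t k) * A t w x := fun x => by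
    rw [← hk, conjTranspose_apply, hE, star_sum]
    simp only [star_mul', hreal, starRingEnd_apply, mul_comm]
  simp only [tripleIntersection, Finset.sum_mul_sum_mul_sum_comm, mul_apply, khatriRao_apply,
    hEk]
  simp only [hE]

theorem conjTranspose_mul_self_khatriRao_mul [Fintype n] [Fintype ι] [DecidableEq ι]
    [CommSemiring R] [StarRing R] {E : ι → Matrix n n R} (hherm : ∀ i, (E i)ᴴ = E i)
    (horth : ∀ i j, E i * E j = if i = j then E i else 0) (c : ι → R) {i j : ι}
    (hc : E i ⊙ E j = ∑ ℓ, c ℓ • E ℓ) (k : ι) :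
    (khatriRao (E i) (E j) * E k)ᴴ * (khatriRao (E i) (E j) * E k) = c k • E k := by
  rw [conjTranspose_mul, hherm, Matrix.mul_assoc, ← Matrix.mul_assoc (khatriRao _ _)ᴴ,
    conjTranspose_khatriRao_mul_khatriRao, hherm, hherm, horth, horth, if_pos rfl, if_pos rfl, hc,
    ← Matrix.mul_assoc, mul_sum_smul_mul_of_orthogonal horth]

end Matrix

theorem stmt11_general {Ω : Type*} [Fintype Ω] (d : ℕ)
    (A : Fin (d + 1) → Matrix Ω Ω ℂ)
    (h01 : ∀ r u x, A r u x = 0 ∨ A r u x = 1)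
    (E : Fin (d + 1) → Matrix Ω Ω ℂ)
    (hherm : ∀ i, (E i)ᴴ = E i)
    (horth : ∀ i j : Fin (d + 1), E i * E j = if i = j then E i else 0)
    (Q : Fin (d + 1) → Fin (d + 1) → ℂ)
    (hQ : ∀ i : Fin (d + 1), E i = ∑ r : Fin (d + 1), Q r i • A r)
    (q : Fin (d + 1) → Fin (d + 1) → Fin (d + 1) → ℂ)
    (hKrein : ∀ i j : Fin (d + 1),
        (E i).hadamard (E j) =
          ((Fintype.card Ω : ℂ))⁻¹ • ∑ ℓ : Fin (d + 1), q i j ℓ • E ℓ)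
    (htr : ∀ k : Fin (d + 1), 0 < ((E k).trace).re ∧ ((E k).trace).im = 0) :
    ∀ i j k : Fin (d + 1),
      q i j k = 0 ↔
        ∀ u v w : Ω,
          (∑ r : Fin (d + 1), ∑ s : Fin (d + 1), ∑ t : Fin (d + 1),
            Q r i * Q s j * (starRingEnd ℂ) (Q t k) *
              (∑ x : Ω, A r u x * A s v x * A t w x)) = 0 := by
  intro i j k
  have hreal : ∀ r u x, star (A r u x) = A r u x := fun r u x => by
    rcases h01 r u x with h | h <;> simp [h]
  have hEk : E k ≠ 0 := fun h => by simpa [h] using (htr k).1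
  have : Nonempty Ω := by
    by_contra h
    exact hEk (Matrix.ext fun u => (not_nonempty_iff.mp h).elim u)
  have hcard : (Fintype.card Ω : ℂ) ≠ 0 := Nat.cast_ne_zero.mpr Fintype.card_ne_zero
  have hKrein' : E i ⊙ E j = ∑ ℓ, ((Fintype.card Ω : ℂ)⁻¹ * q i j ℓ) • E ℓ := by
    simp only [hKrein, Finset.smul_sum, smul_smul]
  have hsum := sum_mul_tripleIntersection hreal Q hQ i j k (hherm k)
  simp only [tripleIntersection] at hsum
  simp only [hsum]
  calc q i j k = 0 ↔ ((Fintype.card Ω : ℂ)⁻¹ * q i j k) • E k = 0 := by simp [hEk, hcard]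
    _ ↔ khatriRao (E i) (E j) * E k = 0 := by
      open scoped ComplexOrder in
      rw [← conjTranspose_mul_self_khatriRao_mul hherm horth _ hKrein' k,
        conjTranspose_mul_self_eq_zero]
    _ ↔ _ := by simp [← Matrix.ext_iff, Prod.forall]

/-- **Vanishing Krein parameters via triple intersection numbers** (a
generalisation of Coolsaet–Jurišić to arbitrary commutative association
schemes): `q_{ij}^k = 0` iff
`Σ_{r,s,t} Q_{ri}·Q_{sj}·conj(Q_{tk})·[r s t]_{u,v,w} = 0` for all `u,v,w`. -/
theorem stmt11 {Ω : Type*} [Fintype Ω] [DecidableEq Ω] (d : ℕ)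
    (A : Fin (d + 1) → Matrix Ω Ω ℂ)
    (h01 : ∀ r u x, A r u x = 0 ∨ A r u x = 1)
    (hA0 : A 0 = 1)
    (hJ : ∑ r : Fin (d + 1), A r = Matrix.of fun _ _ => (1 : ℂ))
    (htrans : ∀ r : Fin (d + 1), ∃ s : Fin (d + 1), (A r)ᵀ = A s)
    (hcomm : ∀ r s : Fin (d + 1), A r * A s = A s * A r)
    (hclosed : ∀ r s : Fin (d + 1), ∃ coef : Fin (d + 1) → ℂ,
        A r * A s = ∑ ℓ : Fin (d + 1), coef ℓ • A ℓ)
    (E : Fin (d + 1) → Matrix Ω Ω ℂ)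
    (hherm : ∀ i, (E i)ᴴ = E i)
    (horth : ∀ i j : Fin (d + 1), E i * E j = if i = j then E i else 0)
    (Q : Fin (d + 1) → Fin (d + 1) → ℂ)
    (hQ : ∀ i : Fin (d + 1), E i = ∑ r : Fin (d + 1), Q r i • A r)
    (q : Fin (d + 1) → Fin (d + 1) → Fin (d + 1) → ℂ)
    (hKrein : ∀ i j : Fin (d + 1),
        (E i).hadamard (E j) =
          ((Fintype.card Ω : ℂ))⁻¹ • ∑ ℓ : Fin (d + 1), q i j ℓ • E ℓ)
    (htr : ∀ k : Fin (d + 1), 0 < ((E k).trace).re ∧ ((E k).trace).im = 0) :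
    ∀ i j k : Fin (d + 1),
      q i j k = 0 ↔
        ∀ u v w : Ω,
          (∑ r : Fin (d + 1), ∑ s : Fin (d + 1), ∑ t : Fin (d + 1),
            Q r i * Q s j * (starRingEnd ℂ) (Q t k) *
              (∑ x : Ω, A r u x * A s v x * A t w x)) = 0 :=
  stmt11_general d A h01 E hherm horth Q hQ q hKrein htr
end
end

section
/- Let Ω be a finite set and let E_i, E_j, E_k ∈ ℂ^{Ω×Ω} be Hermitian idempotent matrices (each satisfies E² = E and E* = E). For u, v, w ∈ Ω set q(u,v,w) := Σ_{x∈Ω} (E_i)_{u,x}·(E_j)_{v,x}·conj((E_k)_{w,x}). Then Σ_{x,y∈Ω} (E_i ∘ E_j ∘ conj(E_k))_{x,y} = Σ_{u,v,w∈Ω} |q(u,v,w)|²; in particular, Σ_{x,y∈Ω} (E_i ∘ E_j ∘ conj(E_k))_{x,y} is a nonnegative real number. -/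
open scoped BigOperators
open Matrix

noncomputable section

private lemma swap5 {α : Type*} [Fintype α] (f : α → α → α → α → α → ℂ) :
    (∑ x : α, ∑ y : α, ∑ u : α, ∑ v : α, ∑ w : α, f x y u v w)
      = ∑ u : α, ∑ v : α, ∑ w : α, ∑ x : α, ∑ y : α, f x y u v w := by
  calc (∑ x : α, ∑ y : α, ∑ u : α, ∑ v : α, ∑ w : α, f x y u v w)
      = ∑ x : α, ∑ u : α, ∑ y : α, ∑ v : α, ∑ w : α, f x y u v w :=
        Finset.sum_congr rfl fun x _ => Finset.sum_comm
    _ = ∑ x : α, ∑ u : α, ∑ v : α, ∑ y : α, ∑ w : α, f x y u v w :=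
        Finset.sum_congr rfl fun x _ => Finset.sum_congr rfl fun u _ => Finset.sum_comm
    _ = ∑ x : α, ∑ u : α, ∑ v : α, ∑ w : α, ∑ y : α, f x y u v w :=
        Finset.sum_congr rfl fun x _ => Finset.sum_congr rfl fun u _ =>
          Finset.sum_congr rfl fun v _ => Finset.sum_comm
    _ = ∑ u : α, ∑ x : α, ∑ v : α, ∑ w : α, ∑ y : α, f x y u v w := Finset.sum_comm
    _ = ∑ u : α, ∑ v : α, ∑ x : α, ∑ w : α, ∑ y : α, f x y u v w :=
        Finset.sum_congr rfl fun u _ => Finset.sum_comm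
    _ = ∑ u : α, ∑ v : α, ∑ w : α, ∑ x : α, ∑ y : α, f x y u v w :=
        Finset.sum_congr rfl fun u _ => Finset.sum_congr rfl fun v _ => Finset.sum_comm

/-- **The entry sum of the triple Schur product of Hermitian idempotents is a
sum of squared moduli**, hence a nonnegative real number. -/
theorem stmt15 {Ω : Type*} [Fintype Ω]
    (Ei Ej Ek : Matrix Ω Ω ℂ)
    (hi : Eiᴴ = Ei) (hi2 : Ei * Ei = Ei)
    (hj : Ejᴴ = Ej) (hj2 : Ej * Ej = Ej)
    (hk : Ekᴴ = Ek) (hk2 : Ek * Ek = Ek)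
    (q : Ω → Ω → Ω → ℂ)
    (hq : ∀ u v w : Ω,
        q u v w = ∑ x : Ω, Ei u x * Ej v x * (starRingEnd ℂ) (Ek w x)) :
    (∑ x : Ω, ∑ y : Ω, (Ei.hadamard (Ej.hadamard (Ek.map (starRingEnd ℂ)))) x y) =
        (∑ u : Ω, ∑ v : Ω, ∑ w : Ω, (Complex.normSq (q u v w) : ℂ)) ∧
      ∃ r : ℝ, 0 ≤ r ∧
        (∑ x : Ω, ∑ y : Ω,
          (Ei.hadamard (Ej.hadamard (Ek.map (starRingEnd ℂ)))) x y) = (r : ℂ) := by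
  set c := starRingEnd ℂ
  have hci : ∀ a b : Ω, c (Ei a b) = Ei b a := fun a b => by
    conv_rhs => rw [← hi]
    simp [Matrix.conjTranspose_apply, c]
  have hcj : ∀ a b : Ω, c (Ej a b) = Ej b a := fun a b => by
    conv_rhs => rw [← hj]
    simp [Matrix.conjTranspose_apply, c]
  have hck : ∀ a b : Ω, c (Ek a b) = Ek b a := fun a b => by
    conv_rhs => rw [← hk]
    simp [Matrix.conjTranspose_apply, c]
  have main : (∑ x : Ω, ∑ y : Ω,
      (Ei.hadamard (Ej.hadamard (Ek.map (starRingEnd ℂ)))) x y) =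
      (∑ u : Ω, ∑ v : Ω, ∑ w : Ω, (Complex.normSq (q u v w) : ℂ)) := by
    have expand : ∀ u v w : Ω, (Complex.normSq (q u v w) : ℂ) =
        ∑ x : Ω, ∑ y : Ω,
          (Ei u x * Ej v x * c (Ek w x)) * (c (Ei u y) * c (Ej v y) * Ek w y) := by
      intro u v w
      rw [← Complex.mul_conj, hq, map_sum, Finset.sum_mul_sum]
      refine Finset.sum_congr rfl fun x _ => Finset.sum_congr rfl fun y _ => ?_
      simp [c, _root_.map_mul, mul_assoc]
    calc (∑ x : Ω, ∑ y : Ω,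
          (Ei.hadamard (Ej.hadamard (Ek.map (starRingEnd ℂ)))) x y)
        = ∑ x : Ω, ∑ y : Ω, Ei y x * Ej y x * c (Ek y x) := by
          rw [Finset.sum_comm]
          simp [Matrix.hadamard_apply, Matrix.map_apply, mul_assoc, c]
      _ = ∑ x : Ω, ∑ y : Ω, ∑ u : Ω, ∑ v : Ω, ∑ w : Ω,
            (Ei u x * Ej v x * c (Ek w x)) * (c (Ei u y) * c (Ej v y) * Ek w y) := by
          refine Finset.sum_congr rfl fun x _ => Finset.sum_congr rfl fun y _ => ?_
          have h1 : (∑ u : Ω, Ei u x * c (Ei u y)) = Ei y x := by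
            simp_rw [hci, mul_comm]
            rw [← Matrix.mul_apply, hi2]
          have h2 : (∑ v : Ω, Ej v x * c (Ej v y)) = Ej y x := by
            simp_rw [hcj, mul_comm]
            rw [← Matrix.mul_apply, hj2]
          have h3 : (∑ w : Ω, c (Ek w x) * Ek w y) = c (Ek y x) := by
            simp_rw [hck]
            rw [← Matrix.mul_apply, hk2]
          have rearr : ∀ u v w : Ω,
              (Ei u x * Ej v x * c (Ek w x)) * (c (Ei u y) * c (Ej v y) * Ek w y)
              = (Ei u x * c (Ei u y)) * ((Ej v x * c (Ej v y)) * (c (Ek w x) * Ek w y)) := by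
            intros; ring
          simp_rw [rearr, ← Finset.mul_sum, ← Finset.sum_mul, h1, h2, h3]
          ring
      _ = ∑ u : Ω, ∑ v : Ω, ∑ w : Ω, (Complex.normSq (q u v w) : ℂ) := by
          rw [swap5]
          simp_rw [expand]
  refine ⟨main, ∑ u : Ω, ∑ v : Ω, ∑ w : Ω, Complex.normSq (q u v w), ?_, ?_⟩
  · exact Finset.sum_nonneg fun u _ => Finset.sum_nonneg fun v _ =>
      Finset.sum_nonneg fun w _ => Complex.normSq_nonneg _
  · rw [main]; push_cast; rfl

end
end

section
/- Let Ω be a finite set with n = |Ω| and let E_0, …, E_d ∈ ℂ^{Ω×Ω} be Hermitian matrices with E_ℓ·E_k = δ_{ℓk}·E_k for all ℓ, k, and suppose E_i ∘ E_j = (1/n)·Σ_{ℓ=0}^d q_{ij}^ℓ·E_ℓ for complex numbers q_{ij}^ℓ, where ∘ is the entrywise (Schur) product. If tr(E_k) is a positive real number, then q_{ij}^k is a nonnegative real number. (The Krein parameters of a commutative, not necessarily symmetric, association scheme are nonnegative.) -/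
/-!
Hermitian idempotents are positive semidefinite, so by the Schur product theorem so is
`E i ⊙ E j`, and `tr ((E i ⊙ E j) E k) = tr (E kᴴ (E i ⊙ E j) E k) ≥ 0`. Expanding `E i ⊙ E j`
in the `E ℓ` and using orthogonality, the same trace equals `q i j k * tr (E k) / n`.
-/

open Matrix ComplexOrder

namespace Matrix

variable {n R : Type*} [Fintype n]

theorem posSemidef_of_conjTranspose_eq_of_mul_self_eq [Ring R] [PartialOrder R] [StarRing R]
    [StarOrderedRing R] {P : Matrix n n R} (hP : Pᴴ = P) (hP2 : P * P = P) : P.PosSemidef := by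
  simpa only [hP, hP2] using posSemidef_conjTranspose_mul_self P

theorem PosSemidef.trace_mul_nonneg_of_conjTranspose_eq_of_mul_self_eq [CommRing R]
    [PartialOrder R] [StarRing R] [AddLeftMono R] {A P : Matrix n n R} (hA : A.PosSemidef)
    (hP : Pᴴ = P) (hP2 : P * P = P) : 0 ≤ (A * P).trace := by
  have h : (A * P).trace = (Pᴴ * A * P).trace := by
    rw [hP, mul_assoc, trace_mul_comm P, mul_assoc, hP2]
  exact h ▸ (hA.conjTranspose_mul_mul_same P).trace_nonneg

theorem sum_smul_mul_of_mul_eq_ite {ι : Type*} [Fintype ι] [DecidableEq ι] [Semiring R]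
    {E : ι → Matrix n n R} (horth : ∀ ℓ k, E ℓ * E k = if ℓ = k then E k else 0)
    (c : ι → R) (k : ι) : (∑ ℓ, c ℓ • E ℓ) * E k = c k • E k := by
  simp only [Matrix.sum_mul, Matrix.smul_mul, horth, smul_ite, smul_zero,
    Finset.sum_ite_eq', Finset.mem_univ, if_true]

end Matrix

theorem RCLike.nonneg_of_mul_nonneg_right {K : Type*} [RCLike K] {c z : K} (h : 0 ≤ c * z)
    (hc : 0 < c) : 0 ≤ z := by
  simpa [inv_mul_cancel_left₀ hc.ne'] using mul_nonneg (RCLike.inv_pos_of_pos hc).le h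

/-- **Nonnegativity of the Krein parameters** of a commutative (not necessarily
symmetric) association scheme: if `tr(E_k)` is a positive real then `q_{ij}^k`
is a nonnegative real number. -/
theorem stmt16 {Ω : Type*} [Fintype Ω] (d : ℕ)
    (E : Fin (d + 1) → Matrix Ω Ω ℂ)
    (hherm : ∀ ℓ : Fin (d + 1), (E ℓ)ᴴ = E ℓ)
    (horth : ∀ ℓ k : Fin (d + 1), E ℓ * E k = if ℓ = k then E k else 0)
    (q : Fin (d + 1) → Fin (d + 1) → Fin (d + 1) → ℂ)
    (hKrein : ∀ i j : Fin (d + 1),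
        (E i).hadamard (E j) =
          ((Fintype.card Ω : ℂ))⁻¹ • ∑ ℓ : Fin (d + 1), q i j ℓ • E ℓ)
    (i j k : Fin (d + 1))
    (htr : 0 < ((E k).trace).re ∧ ((E k).trace).im = 0) :
    ∃ r : ℝ, 0 ≤ r ∧ q i j k = (r : ℂ) := by
  have hidem (ℓ) : E ℓ * E ℓ = E ℓ := by simpa using horth ℓ ℓ
  have hpsd (ℓ) : (E ℓ).PosSemidef :=
    posSemidef_of_conjTranspose_eq_of_mul_self_eq (hherm ℓ) (hidem ℓ)
  have htrace : ((E i).hadamard (E j) * E k).trace =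
      ((Fintype.card Ω : ℂ)⁻¹ * (E k).trace) * q i j k := by
    rw [hKrein, smul_mul, sum_smul_mul_of_mul_eq_ite horth, trace_smul, trace_smul, smul_eq_mul,
      smul_eq_mul, mul_comm (q i j k), mul_assoc]
  have hnonneg : 0 ≤ ((E i).hadamard (E j) * E k).trace :=
    ((hpsd i).hadamard (hpsd j)).trace_mul_nonneg_of_conjTranspose_eq_of_mul_self_eq (hherm k)
      (hidem k)
  have htr_pos : 0 < (E k).trace := Complex.pos_iff.mpr ⟨htr.1, htr.2.symm⟩
  have hcard : 0 < (Fintype.card Ω : ℂ) := by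
    have : Nonempty Ω := not_isEmpty_iff.mp fun _ ↦ htr_pos.ne' (trace_eq_zero_of_isEmpty _)
    exact_mod_cast Fintype.card_pos
  rw [htrace] at hnonneg
  obtain ⟨r, hr, hq⟩ := RCLike.nonneg_iff_exists_ofReal.mp
    (RCLike.nonneg_of_mul_nonneg_right hnonneg (mul_pos (RCLike.inv_pos_of_pos hcard) htr_pos))
  exact ⟨r, hr, hq.symm⟩
end
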